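/- Let δ < b be real numbers and let y : [δ,b] → ℝ be continuously differentiable with y'(δ) > 0, and suppose that for every u ∈ (δ,b) with y'(u) = 0 the second derivative y''(u) exists and satisfies y''(u) > 0 (i.e. every interior critical point of y would be a strict local minimum of y). Then y'(u) > 0 for all u ∈ [δ,b). -/

import Mathlib

/-!
If `y' ≤ 0` somewhere in `[δ, b)`, then by the intermediate value theorem `y'` has a first zero
`z > δ`. Since `y' > 0` on `[δ, z)` and `y' z = 0`, the left difference quotients of `y'` at `z`
are negative, so `y''(z) ≤ 0`, contradicting the hypothesis at the critical point `z`.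
-/

open Set Topology Filter

lemma HasDerivWithinAt.nonpos_of_eventually_le_left {f : ℝ → ℝ} {c z : ℝ}
    (hd : HasDerivWithinAt f c (Iio z) z) (hle : ∀ᶠ t in 𝓝[<] z, f z ≤ f t) : c ≤ 0 := by
  have hslope : Tendsto (slope f z) (𝓝[<] z) (𝓝 c) :=
    (hasDerivWithinAt_iff_tendsto_slope' self_notMem_Iio).mp hd
  refine le_of_tendsto hslope ?_
  filter_upwards [hle, self_mem_nhdsWithin] with t ht htz
  rw [slope_def_field]
  exact div_nonpos_of_nonneg_of_nonpos (sub_nonneg.mpr ht) (sub_nonpos.mpr (le_of_lt htz))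

lemma ContinuousOn.exists_first_zero_of_pos_of_nonpos {f : ℝ → ℝ} {a u : ℝ} (hau : a ≤ u)
    (hf : ContinuousOn f (Icc a u)) (ha : 0 < f a) (hu : f u ≤ 0) :
    ∃ z ∈ Ioc a u, f z = 0 ∧ ∀ t ∈ Ico a z, 0 < f t := by
  set T := Icc a u ∩ f ⁻¹' Iic 0
  have hT : IsCompact T :=
    isCompact_Icc.of_isClosed_subset (hf.preimage_isClosed_of_isClosed isClosed_Icc isClosed_Iic)
      inter_subset_left
  obtain ⟨z, ⟨⟨haz, hzu⟩, hz⟩, hzmin⟩ := hT.exists_isLeast ⟨u, ⟨hau, le_rfl⟩, hu⟩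
  have hpos : ∀ t ∈ Ico a z, 0 < f t := fun t ht =>
    not_le.mp fun hft => (hzmin ⟨⟨ht.1, ht.2.le.trans hzu⟩, hft⟩).not_gt ht.2
  have haz' : a < z := haz.lt_of_ne (by rintro rfl; exact hz.not_gt ha)
  -- a zero of `f` on `[a, z]` lies in `T`, so it can only be `z` itself
  obtain ⟨w, ⟨haw, hwz⟩, hw⟩ :=
    intermediate_value_Icc' haz (hf.mono (Icc_subset_Icc_right hzu)) ⟨hz, ha.le⟩
  have hwz' : w = z := le_antisymm hwz (hzmin ⟨⟨haw, hwz.trans hzu⟩, hw.le⟩)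
  exact ⟨z, ⟨haz', hzu⟩, hwz' ▸ hw, hpos⟩

theorem lem_no_interior_min (δ b : ℝ) (y' : ℝ → ℝ)
    (hcont : ContinuousOn y' (Set.Icc δ b))
    (hpos : 0 < y' δ)
    (hcrit : ∀ u ∈ Set.Ioo δ b, y' u = 0 →
      ∃ c : ℝ, HasDerivAt y' c u ∧ 0 < c) :
    ∀ u ∈ Set.Ico δ b, 0 < y' u := by
  intro u hu
  by_contra! hu0
  obtain ⟨z, ⟨hδz, hzu⟩, hz0, hleft⟩ :=
    (hcont.mono (Icc_subset_Icc_right hu.2.le)).exists_first_zero_of_pos_of_nonpos hu.1 hpos hu0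
  obtain ⟨c, hc, hcpos⟩ := hcrit z ⟨hδz, hzu.trans_lt hu.2⟩ hz0
  have hc_nonpos : c ≤ 0 := by
    refine hc.hasDerivWithinAt.nonpos_of_eventually_le_left ?_
    filter_upwards [Ioo_mem_nhdsLT hδz] with t ht
    exact hz0 ▸ (hleft t ⟨ht.1.le, ht.2⟩).le
  exact hc_nonpos.not_gt hcpos
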